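/- arXiv:2405.15010 — 6 statements merged into one kernel-verified Lean document; each statement's English description precedes it below -/
import Mathlib

section
/- Let f : ℝ^d → ℝ be differentiable, convex, and (L0, L1)-smooth with L0 > 0, L1 > 0, and suppose f attains its minimum at x* with f* = f(x*). Then for every x ∈ ℝ^d, ‖∇f(x)‖² / (2(L0 + L1‖∇f(x)‖)) ≤ f(x) − f*. -/
/-!
Smoothness at `x` controls the gradient on the ball of radius `1 / L1` around `x` with the
local constant `L = L0 + L1 ‖∇f x‖`, which gives the descent lemma
`f (x + v) ≤ f x + ⟪∇f x, v⟫ + L / 2 ‖v‖²` for `‖v‖ ≤ 1 / L1`. The gradient step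
`v = -L⁻¹ ∇f x` has length `‖∇f x‖ / L ≤ 1 / L1`, so it is admissible and lowers `f` by at
least `‖∇f x‖² / (2L)`; since `f xstar` lies below the new value, the bound follows.
-/

open Set

section

variable {E : Type*} [NormedAddCommGroup E] [InnerProductSpace ℝ E] [CompleteSpace E]
  {f : E → ℝ} {x v : E} {L r : ℝ}

theorem hasDerivAt_comp_add_smul {s : ℝ} (hf : DifferentiableAt ℝ f (x + s • v)) :
    HasDerivAt (fun t : ℝ => f (x + t • v)) (inner ℝ (gradient f (x + s • v)) v) s := by
  have hline : HasDerivAt (fun t : ℝ => x + t • v) v s := by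
    simpa using ((hasDerivAt_id s).smul_const v).const_add x
  have := hf.hasFDerivAt.comp_hasDerivAt s hline
  rwa [gradient, InnerProductSpace.toDual_symm_apply]

theorem le_add_inner_gradient_add_of_norm_gradient_sub_le (hf : Differentiable ℝ f)
    (hsmooth : ∀ y, ‖x - y‖ ≤ r → ‖gradient f x - gradient f y‖ ≤ L * ‖x - y‖)
    (hv : ‖v‖ ≤ r) :
    f (x + v) ≤ f x + inner ℝ (gradient f x) v + L / 2 * ‖v‖ ^ 2 := by
  set g := gradient f x
  have hbound : ∀ s ∈ Ico (0 : ℝ) 1,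
      inner ℝ (gradient f (x + s • v)) v ≤ inner ℝ g v + L * ‖v‖ ^ 2 * s := by
    rintro s ⟨hs0, hs1⟩
    have hdist : ‖x - (x + s • v)‖ = s * ‖v‖ := by
      rw [sub_add_cancel_left, norm_neg, norm_smul, Real.norm_of_nonneg hs0]
    have hclose : ‖x - (x + s • v)‖ ≤ r := by
      rw [hdist]
      exact (mul_le_of_le_one_left (norm_nonneg v) hs1.le).trans hv
    calc inner ℝ (gradient f (x + s • v)) v
        = inner ℝ g v + inner ℝ (gradient f (x + s • v) - g) v := by
          rw [inner_sub_left]; ring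
      _ ≤ inner ℝ g v + ‖g - gradient f (x + s • v)‖ * ‖v‖ := by
          rw [norm_sub_rev]; gcongr; exact real_inner_le_norm _ _
      _ ≤ inner ℝ g v + L * (s * ‖v‖) * ‖v‖ := by
          rw [← hdist]; gcongr; exact hsmooth _ hclose
      _ = inner ℝ g v + L * ‖v‖ ^ 2 * s := by ring
  have hquad : ∀ s : ℝ, HasDerivAt (fun t => f x + t * inner ℝ g v + L / 2 * ‖v‖ ^ 2 * t ^ 2)
      (inner ℝ g v + L * ‖v‖ ^ 2 * s) s := fun s =>
    ((((hasDerivAt_id s).mul_const (inner ℝ g v)).const_add (f x)).add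
      ((hasDerivAt_pow 2 s).const_mul (L / 2 * ‖v‖ ^ 2))).congr_deriv
      (by simp only [one_mul, Nat.cast_ofNat, Nat.add_one_sub_one, pow_one, add_right_inj]; ring)
  have hline (s : ℝ) := hasDerivAt_comp_add_smul (hf (x + s • v))
  have hcompare := image_le_of_deriv_right_le_deriv_boundary (a := 0) (b := 1)
    (fun s _ => (hline s).continuousAt.continuousWithinAt)
    (fun s _ => (hline s).hasDerivWithinAt) (by simp)
    (fun s _ => (hquad s).continuousAt.continuousWithinAt)
    (fun s _ => (hquad s).hasDerivWithinAt) hbound (right_mem_Icc.2 zero_le_one)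
  simpa using hcompare

theorem apply_gradient_step_le_of_norm_gradient_sub_le (hf : Differentiable ℝ f) (hL : 0 < L)
    (hsmooth : ∀ y, ‖x - y‖ ≤ r → ‖gradient f x - gradient f y‖ ≤ L * ‖x - y‖)
    (hr : ‖gradient f x‖ ≤ L * r) :
    f (x - L⁻¹ • gradient f x) ≤ f x - ‖gradient f x‖ ^ 2 / (2 * L) := by
  set g := gradient f x
  have hstep : ‖-(L⁻¹ • g)‖ ≤ r := by
    rwa [norm_neg, norm_smul, Real.norm_of_nonneg (inv_nonneg.2 hL.le), inv_mul_le_iff₀ hL]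
  have hdescent := le_add_inner_gradient_add_of_norm_gradient_sub_le hf hsmooth hstep
  rw [← sub_eq_add_neg, inner_neg_right, real_inner_smul_right, real_inner_self_eq_norm_sq,
    norm_neg, norm_smul, Real.norm_of_nonneg (inv_nonneg.2 hL.le)] at hdescent
  convert hdescent using 1
  field_simp
  ring

end

theorem polyak_lower_bound_generalized_smooth_general {d : ℕ}
    (f : EuclideanSpace ℝ (Fin d) → ℝ) (L0 L1 : ℝ)
    (hL0 : 0 < L0) (hL1 : 0 < L1)
    (hdiff : Differentiable ℝ f)
    (hsmooth : ∀ x y : EuclideanSpace ℝ (Fin d), ‖x - y‖ ≤ 1 / L1 →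
      ‖gradient f x - gradient f y‖ ≤ (L0 + L1 * ‖gradient f x‖) * ‖x - y‖)
    (xstar : EuclideanSpace ℝ (Fin d)) (hmin : ∀ y, f xstar ≤ f y)
    (x : EuclideanSpace ℝ (Fin d)) :
    ‖gradient f x‖ ^ 2 / (2 * (L0 + L1 * ‖gradient f x‖)) ≤ f x - f xstar := by
  have hL : 0 < L0 + L1 * ‖gradient f x‖ := by positivity
  have hr : ‖gradient f x‖ ≤ (L0 + L1 * ‖gradient f x‖) * (1 / L1) := by
    rw [mul_one_div, le_div_iff₀ hL1]
    linarith [mul_comm L1 ‖gradient f x‖]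
  have hstep := apply_gradient_step_le_of_norm_gradient_sub_le hdiff hL (hsmooth x) hr
  linarith [hmin (x - (L0 + L1 * ‖gradient f x‖)⁻¹ • gradient f x)]

/-- For a differentiable, convex, (L0, L1)-smooth function attaining its
minimum at `xstar`, every `x` satisfies
`‖∇f(x)‖² / (2(L0 + L1‖∇f(x)‖)) ≤ f(x) − f(xstar)`. -/
theorem polyak_lower_bound_generalized_smooth {d : ℕ}
    (f : EuclideanSpace ℝ (Fin d) → ℝ) (L0 L1 : ℝ)
    (hL0 : 0 < L0) (hL1 : 0 < L1)
    (hdiff : Differentiable ℝ f)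
    (hconv : ConvexOn ℝ Set.univ f)
    (hsmooth : ∀ x y : EuclideanSpace ℝ (Fin d), ‖x - y‖ ≤ 1 / L1 →
      ‖gradient f x - gradient f y‖ ≤ (L0 + L1 * ‖gradient f x‖) * ‖x - y‖)
    (xstar : EuclideanSpace ℝ (Fin d)) (hmin : ∀ y, f xstar ≤ f y)
    (x : EuclideanSpace ℝ (Fin d)) :
    ‖gradient f x‖ ^ 2 / (2 * (L0 + L1 * ‖gradient f x‖)) ≤ f x - f xstar :=
  polyak_lower_bound_generalized_smooth_general f L0 L1 hL0 hL1 hdiff hsmooth xstar hmin x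
end

section
/- Let f : ℝ^d → ℝ be differentiable, convex, L-smooth with L > 0, and (L0, L1)-smooth with L0 > 0, L1 > 0, and suppose f attains its minimum at x* with f* = f(x*). Let x_t ∈ ℝ^d satisfy ‖∇f(x_t)‖ > L0/L1, and let x_{t+1} = x_t − η_t ∇f(x_t) with Polyak stepsize η_t = (f(x_t) − f*)/‖∇f(x_t)‖². Then ‖x_{t+1} − x*‖² ≤ ‖x_t − x*‖² − (1/(4 L1)) · √((f(x_t) − f*)/(2L)). -/
/-!
Convexity gives `f xₜ - f* ≤ ⟪∇f xₜ, xₜ - x*⟫`, so the Polyak step shrinks `‖xₜ - x*‖²` by at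
least `(f xₜ - f*)² / ‖∇f xₜ‖²`. The descent lemma along `-∇f xₜ` bounds the gap `f xₜ - f*`
from below twice: by `‖∇f xₜ‖² / (2L)` (step `1/L`, using `L`-smoothness) and by
`‖∇f xₜ‖ / (4L1)` (step of length `1/(2L1)`, using `(L0, L1)`-smoothness and
`L0 ≤ L1 ‖∇f xₜ‖`). Split the decrease as `(gap / ‖∇f xₜ‖) · (gap / ‖∇f xₜ‖)`: the first bound
makes one factor at least `√(gap / (2L))`, the second makes the other at least `1 / (4L1)`.
-/

open Set
open scoped Gradient InnerProductSpace

section InnerProductSpace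

variable {F : Type*} [NormedAddCommGroup F] [InnerProductSpace ℝ F]

theorem norm_sub_smul_sub_sq_le_of_le_inner {x y g : F} {Δ : ℝ} (hΔ : 0 ≤ Δ)
    (hinner : Δ ≤ ⟪g, x - y⟫_ℝ) :
    ‖x - (Δ / ‖g‖ ^ 2) • g - y‖ ^ 2 ≤ ‖x - y‖ ^ 2 - Δ ^ 2 / ‖g‖ ^ 2 := by
  have hexpand : ‖x - (Δ / ‖g‖ ^ 2) • g - y‖ ^ 2
      = ‖x - y‖ ^ 2 - 2 * (Δ / ‖g‖ ^ 2) * ⟪g, x - y⟫_ℝ + (Δ / ‖g‖ ^ 2) ^ 2 * ‖g‖ ^ 2 := by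
    rw [sub_right_comm, norm_sub_sq_real, real_inner_smul_right, norm_smul, real_inner_comm,
      mul_pow, Real.norm_of_nonneg (by positivity)]
    ring
  have hsq : (Δ / ‖g‖ ^ 2) ^ 2 * ‖g‖ ^ 2 = Δ ^ 2 / ‖g‖ ^ 2 := by
    obtain hg | hg := eq_or_ne ‖g‖ 0
    · simp [hg]
    · field_simp
  have : 2 * (Δ / ‖g‖ ^ 2) * Δ ≤ 2 * (Δ / ‖g‖ ^ 2) * ⟪g, x - y⟫_ℝ := by gcongr
  rw [hexpand, hsq]
  linarith [show 2 * (Δ / ‖g‖ ^ 2) * Δ = 2 * (Δ ^ 2 / ‖g‖ ^ 2) by ring]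

variable [CompleteSpace F] {f : F → ℝ}

theorem hasDerivAt_apply_add_smul {x v : F} {t : ℝ} (hf : DifferentiableAt ℝ f (x + t • v)) :
    HasDerivAt (fun s : ℝ => f (x + s • v)) ⟪∇ f (x + t • v), v⟫_ℝ t := by
  have hline : HasDerivAt (fun s : ℝ => x + s • v) v t := by
    simpa using ((hasDerivAt_id t).smul_const v).const_add x
  rw [inner_gradient_left]
  exact hf.hasFDerivAt.comp_hasDerivAt t hline

theorem ConvexOn.sub_le_inner_gradient (hconv : ConvexOn ℝ univ f) {x : F}
    (hf : DifferentiableAt ℝ f x) (y : F) :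
    f x - f y ≤ ⟪∇ f x, x - y⟫_ℝ := by
  have hline : ConvexOn ℝ univ (fun s : ℝ => f (x + s • (y - x))) := by
    simpa [Function.comp_def, AffineMap.lineMap_apply, add_comm]
      using hconv.comp_affineMap (AffineMap.lineMap x y)
  have hderiv : HasDerivAt (fun s : ℝ => f (x + s • (y - x))) ⟪∇ f x, y - x⟫_ℝ 0 := by
    simpa using hasDerivAt_apply_add_smul (v := y - x) (t := 0) (by simpa using hf)
  have := hline.le_slope_of_hasDerivAt (mem_univ 0) (mem_univ 1) one_pos hderiv
  rw [slope_def_field] at this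
  rw [← neg_sub y x, inner_neg_right]
  simp only [zero_smul, add_zero, one_smul, add_sub_cancel, sub_zero, div_one] at this
  linarith

theorem apply_add_le_of_norm_gradient_sub_le (hf : Differentiable ℝ f) {x v : F} {K : ℝ}
    (hK : ∀ y, ‖x - y‖ ≤ ‖v‖ → ‖∇ f x - ∇ f y‖ ≤ K * ‖x - y‖) :
    f (x + v) ≤ f x + ⟪∇ f x, v⟫_ℝ + K / 2 * ‖v‖ ^ 2 := by
  set ψ : ℝ → ℝ := fun t => f (x + t • v) - t * ⟪∇ f x, v⟫_ℝ - K / 2 * ‖v‖ ^ 2 * t ^ 2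
  have hψ : ∀ t, HasDerivAt ψ (⟪∇ f (x + t • v) - ∇ f x, v⟫_ℝ - K * ‖v‖ ^ 2 * t) t := by
    intro t
    refine (((hasDerivAt_apply_add_smul (hf _)).sub ((hasDerivAt_id t).mul_const _)).sub
      ((hasDerivAt_pow 2 t).const_mul (K / 2 * ‖v‖ ^ 2))).congr_deriv ?_
    rw [inner_sub_left]
    ring
  have hanti : AntitoneOn ψ (Icc 0 1) := by
    refine antitoneOn_of_deriv_nonpos (convex_Icc 0 1)
      (fun t _ => (hψ t).continuousAt.continuousWithinAt)
      (fun t _ => (hψ t).differentiableAt.differentiableWithinAt) fun t ht => ?_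
    rw [interior_Icc] at ht
    have hdist : ‖x - (x + t • v)‖ = t * ‖v‖ := by
      rw [sub_add_cancel_left, norm_neg, norm_smul, Real.norm_of_nonneg ht.1.le]
    have hball : ‖x - (x + t • v)‖ ≤ ‖v‖ := by
      rw [hdist]; exact mul_le_of_le_one_left (norm_nonneg v) ht.2.le
    have hgrad : ⟪∇ f (x + t • v) - ∇ f x, v⟫_ℝ ≤ K * (t * ‖v‖) * ‖v‖ :=
      (real_inner_le_norm _ _).trans <| by
        rw [norm_sub_rev, ← hdist]; gcongr; exact hK _ hball
    rw [(hψ t).deriv]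
    linarith
  have := hanti (left_mem_Icc.2 zero_le_one) (right_mem_Icc.2 zero_le_one) zero_le_one
  simp only [ψ, zero_smul, add_zero, one_smul, zero_mul, one_mul, sub_zero, one_pow, mul_one,
    ne_eq, OfNat.ofNat_ne_zero, not_false_eq_true, zero_pow] at this
  linarith

theorem apply_sub_smul_gradient_le (hf : Differentiable ℝ f) {x : F} {s K : ℝ} (hs : 0 ≤ s)
    (hK : ∀ y, ‖x - y‖ ≤ s * ‖∇ f x‖ → ‖∇ f x - ∇ f y‖ ≤ K * ‖x - y‖) :
    f (x - s • ∇ f x) ≤ f x - s * ‖∇ f x‖ ^ 2 + K / 2 * (s * ‖∇ f x‖) ^ 2 := by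
  have hv : ‖-(s • ∇ f x)‖ = s * ‖∇ f x‖ := by
    rw [norm_neg, norm_smul, Real.norm_of_nonneg hs]
  have := apply_add_le_of_norm_gradient_sub_le hf (v := -(s • ∇ f x)) (hv ▸ hK)
  rwa [← sub_eq_add_neg, inner_neg_right, real_inner_smul_right, real_inner_self_eq_norm_sq, hv,
    ← sub_eq_add_neg] at this

theorem sq_norm_gradient_div_two_mul_le_sub (hf : Differentiable ℝ f) {x : F} {m L : ℝ}
    (hL : 0 < L) (hlip : ∀ y, ‖∇ f x - ∇ f y‖ ≤ L * ‖x - y‖) (hmin : ∀ y, m ≤ f y) :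
    ‖∇ f x‖ ^ 2 / (2 * L) ≤ f x - m := by
  have hdescent := apply_sub_smul_gradient_le hf (inv_nonneg.2 hL.le) fun y _ => hlip y
  have : m ≤ f x - ‖∇ f x‖ ^ 2 / (2 * L) := calc
    m ≤ f (x - L⁻¹ • ∇ f x) := hmin _
    _ ≤ f x - L⁻¹ * ‖∇ f x‖ ^ 2 + L / 2 * (L⁻¹ * ‖∇ f x‖) ^ 2 := hdescent
    _ = f x - ‖∇ f x‖ ^ 2 / (2 * L) := by field_simp; ring
  linarith

theorem norm_gradient_div_four_mul_le_sub (hf : Differentiable ℝ f) {x : F} {m L0 L1 : ℝ}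
    (hL1 : 0 < L1) (hL0 : L0 ≤ L1 * ‖∇ f x‖)
    (hsmooth : ∀ y, ‖x - y‖ ≤ 1 / L1 → ‖∇ f x - ∇ f y‖ ≤ (L0 + L1 * ‖∇ f x‖) * ‖x - y‖)
    (hmin : ∀ y, m ≤ f y) :
    ‖∇ f x‖ / (4 * L1) ≤ f x - m := by
  obtain hg | hg := (norm_nonneg (∇ f x)).eq_or_lt
  · rw [← hg, zero_div, sub_nonneg]
    exact hmin x
  set s := 1 / (2 * L1 * ‖∇ f x‖) with hs_def
  have hs : s * ‖∇ f x‖ = 1 / (2 * L1) := by rw [hs_def]; field_simp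
  have hdescent := apply_sub_smul_gradient_le hf (s := s) (by positivity) fun y hy =>
    hsmooth y (hy.trans (by rw [hs]; gcongr; linarith))
  rw [hs] at hdescent
  have : m ≤ f x - ‖∇ f x‖ / (4 * L1) := calc
    m ≤ f (x - s • ∇ f x) := hmin _
    _ ≤ f x - s * ‖∇ f x‖ ^ 2 + (L0 + L1 * ‖∇ f x‖) / 2 * (1 / (2 * L1)) ^ 2 := hdescent
    _ ≤ f x - s * ‖∇ f x‖ ^ 2 + (2 * L1 * ‖∇ f x‖) / 2 * (1 / (2 * L1)) ^ 2 := by gcongr; linarith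
    _ = f x - ‖∇ f x‖ / (4 * L1) := by rw [sq, ← mul_assoc, hs]; field_simp; ring
  linarith

end InnerProductSpace

theorem one_div_mul_sqrt_le_sq_div_sq {Δ a L L1 : ℝ} (ha : 0 < a) (hL : 0 < L) (hΔ : 0 ≤ Δ)
    (hquad : a ^ 2 / (2 * L) ≤ Δ) (hlin : a / (4 * L1) ≤ Δ) :
    1 / (4 * L1) * √(Δ / (2 * L)) ≤ Δ ^ 2 / a ^ 2 := by
  have hsqrt : √(Δ / (2 * L)) ≤ Δ / a := by
    rw [Real.sqrt_le_left (by positivity), div_pow, div_le_div_iff₀ (by positivity) (by positivity)]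
    have := (div_le_iff₀ (by positivity)).1 hquad
    nlinarith
  have hcoef : 1 / (4 * L1) ≤ Δ / a := by
    rw [le_div_iff₀ ha]
    linarith [show 1 / (4 * L1) * a = a / (4 * L1) by ring]
  calc 1 / (4 * L1) * √(Δ / (2 * L)) ≤ Δ / a * (Δ / a) :=
        mul_le_mul hcoef hsqrt (Real.sqrt_nonneg _) (by positivity)
    _ = Δ ^ 2 / a ^ 2 := by ring

/-- One step of gradient descent with Polyak stepsize, in the large-gradient
regime `‖∇f(x_t)‖ > L0/L1`, decreases the squared distance to the optimum by at least
`(1/(4L1))·√((f(x_t) − f*)/(2L))`. -/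
theorem polyak_step_large_gradient_case {d : ℕ}
    (f : EuclideanSpace ℝ (Fin d) → ℝ) (L L0 L1 : ℝ)
    (hL : 0 < L) (hL0 : 0 < L0) (hL1 : 0 < L1)
    (hdiff : Differentiable ℝ f)
    (hconv : ConvexOn ℝ Set.univ f)
    (hLsmooth : ∀ x y : EuclideanSpace ℝ (Fin d),
      ‖gradient f x - gradient f y‖ ≤ L * ‖x - y‖)
    (hsmooth : ∀ x y : EuclideanSpace ℝ (Fin d), ‖x - y‖ ≤ 1 / L1 →
      ‖gradient f x - gradient f y‖ ≤ (L0 + L1 * ‖gradient f x‖) * ‖x - y‖)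
    (xstar : EuclideanSpace ℝ (Fin d)) (hmin : ∀ y, f xstar ≤ f y)
    (xt xt1 : EuclideanSpace ℝ (Fin d))
    (hlarge : ‖gradient f xt‖ > L0 / L1)
    (η : ℝ) (hη : η = (f xt - f xstar) / ‖gradient f xt‖ ^ 2)
    (hstep : xt1 = xt - η • gradient f xt) :
    ‖xt1 - xstar‖ ^ 2 ≤ ‖xt - xstar‖ ^ 2 -
      (1 / (4 * L1)) * Real.sqrt ((f xt - f xstar) / (2 * L)) := by
  have hgrad : 0 < ‖gradient f xt‖ := (div_pos hL0 hL1).trans hlarge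
  have hL0grad : L0 ≤ L1 * ‖gradient f xt‖ := by
    rw [gt_iff_lt, div_lt_iff₀ hL1] at hlarge
    linarith
  have hgap : 0 ≤ f xt - f xstar := sub_nonneg.2 (hmin xt)
  have hquad := sq_norm_gradient_div_two_mul_le_sub hdiff hL (hLsmooth xt) hmin
  have hlin := norm_gradient_div_four_mul_le_sub hdiff hL1 hL0grad (hsmooth xt) hmin
  subst hstep hη
  calc _ ≤ ‖xt - xstar‖ ^ 2 - (f xt - f xstar) ^ 2 / ‖gradient f xt‖ ^ 2 :=
        norm_sub_smul_sub_sq_le_of_le_inner hgap (hconv.sub_le_inner_gradient (hdiff xt) xstar)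
    _ ≤ _ := by
        gcongr
        exact one_div_mul_sqrt_le_sq_div_sq hgrad hL hgap hquad hlin
end

section
/- Let f : ℝ^d → ℝ be differentiable, convex, L-smooth with L > 0, and (L0, L1)-smooth with L0 > 0, L1 > 0, and suppose f attains its minimum at x* with f* = f(x*). Let T ≥ 1 and let the sequence (x_t)_{t=0,...,T} be generated by gradient descent with Polyak stepsize: x_{t+1} = x_t − η_t ∇f(x_t) with η_t = (f(x_t) − f*)/‖∇f(x_t)‖² (where ∇f(x_t) ≠ 0 for all t < T). Then min_{0 ≤ t ≤ T−1} f(x_t) − f* ≤ 8 L0 ‖x_0 − x*‖² / T + 64 L L1² ‖x_0 − x*‖⁴ / T². -/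
/-!
By convexity, a Polyak step decreases `‖x_t - x*‖²` by at least `(f x_t - f*)² / ‖∇f x_t‖²`,
so these terms sum to at most `‖x_0 - x*‖²`. Both smoothness assumptions bound the gradient by
the gap, `‖∇f‖² ≤ 4L (f - f*)` and `‖∇f‖² ≤ 4(L0 + L1‖∇f‖)(f - f*)`; feeding the first into the
second, each term is at least `Δ / (4(L0 + 2L1 √(LΔ)))`, where `Δ` is the smallest gap. The
resulting inequality `TΔ ≤ 4(L0 + 2L1 √(LΔ)) ‖x_0 - x*‖²` is quadratic in `√Δ`, and AM-GM on
its cross term gives the rate.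
-/

open RealInnerProductSpace Set

section Gradient

variable {E : Type*} [NormedAddCommGroup E] [InnerProductSpace ℝ E] [CompleteSpace E]
  {f : E → ℝ}

theorem ConvexOn.add_inner_gradient_le (hconv : ConvexOn ℝ univ f) {x : E}
    (hf : DifferentiableAt ℝ f x) (y : E) : f x + ⟪gradient f x, y - x⟫ ≤ f y := by
  have hline : ConvexOn ℝ univ (f ∘ AffineMap.lineMap (k := ℝ) x y) := by
    simpa using hconv.comp_affineMap (AffineMap.lineMap (k := ℝ) x y)
  have hderiv : HasDerivAt (f ∘ AffineMap.lineMap (k := ℝ) x y) ⟪gradient f x, y - x⟫ 0 := by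
    rw [inner_gradient_left]
    exact hf.hasFDerivAt.comp_hasDerivAt_of_eq 0 AffineMap.hasDerivAt_lineMap (by simp)
  have := hline.le_slope_of_hasDerivAt (mem_univ 0) (mem_univ 1) zero_lt_one hderiv
  simp only [slope_def_field, Function.comp_apply, AffineMap.lineMap_apply_zero,
    AffineMap.lineMap_apply_one, sub_zero, div_one] at this
  linarith

theorem le_add_inner_gradient_add_mul_norm (hf : Differentiable ℝ f) {x y : E} {B : ℝ}
    (hB : ∀ z ∈ segment ℝ x y, ‖gradient f z - gradient f x‖ ≤ B) :
    f y ≤ f x + ⟪gradient f x, y - x⟫ + B * ‖y - x‖ := by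
  set g := gradient f x
  have hderiv : ∀ z, HasFDerivAt (fun w => f w - ⟪g, w⟫)
      (InnerProductSpace.toDual ℝ E (gradient f z - g)) z := by
    intro z
    rw [map_sub, toDual_gradient]
    exact (hf z).hasFDerivAt.sub (innerSL ℝ g).hasFDerivAt
  have key := (convex_segment x y).norm_image_sub_le_of_norm_hasFDerivWithin_le
    (fun z _ => (hderiv z).hasFDerivWithinAt)
    (fun z hz => (LinearIsometryEquiv.norm_map _ _).trans_le (hB z hz))
    (left_mem_segment ℝ x y) (right_mem_segment ℝ x y)
  rw [inner_sub_right]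
  linarith [(abs_le.mp (Real.norm_eq_abs _ ▸ key)).2]

theorem sq_norm_gradient_le_four_mul_sub (hf : Differentiable ℝ f) {x xstar : E}
    (hmin : ∀ y, f xstar ≤ f y) {M : ℝ} (hM : 0 < M)
    (hlip : ∀ z, ‖z - x‖ ≤ ‖gradient f x‖ / (2 * M) →
      ‖gradient f z - gradient f x‖ ≤ M * ‖z - x‖) :
    ‖gradient f x‖ ^ 2 ≤ 4 * M * (f x - f xstar) := by
  set g := gradient f x
  set y := x - (2 * M)⁻¹ • g
  have hyx : y - x = -((2 * M)⁻¹ • g) := by simp [y]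
  have hnorm : ‖y - x‖ = ‖g‖ / (2 * M) := by
    rw [hyx, norm_neg, norm_smul, Real.norm_of_nonneg (by positivity), inv_mul_eq_div]
  have hinner : ⟪g, y - x⟫ = -(‖g‖ ^ 2 / (2 * M)) := by
    rw [hyx, inner_neg_right, real_inner_smul_right, real_inner_self_eq_norm_sq, inv_mul_eq_div]
  have hdesc := le_add_inner_gradient_add_mul_norm hf (B := M * ‖y - x‖) fun z hz => by
    have hzx : ‖z - x‖ ≤ ‖y - x‖ := by
      simpa [dist_eq_norm, norm_sub_rev x y] using segment_subset_closedBall_left x y hz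
    exact (hlip z (hzx.trans hnorm.le)).trans (by gcongr)
  rw [hinner, hnorm] at hdesc
  have hgap : ‖g‖ ^ 2 / (4 * M) ≤ f x - f xstar := by
    have : -(‖g‖ ^ 2 / (2 * M)) + M * (‖g‖ / (2 * M)) * (‖g‖ / (2 * M)) =
        -(‖g‖ ^ 2 / (4 * M)) := by
      field_simp; ring
    linarith [hmin y]
  rwa [div_le_iff₀ (by positivity), mul_comm] at hgap

theorem sq_norm_gradient_le_of_generalized_smooth (hf : Differentiable ℝ f) {L0 L1 : ℝ}
    (hL0 : 0 < L0) (hL1 : 0 < L1)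
    (hsmooth : ∀ x y : E, ‖x - y‖ ≤ 1 / L1 →
      ‖gradient f x - gradient f y‖ ≤ (L0 + L1 * ‖gradient f x‖) * ‖x - y‖)
    {xstar : E} (hmin : ∀ y, f xstar ≤ f y) (x : E) :
    ‖gradient f x‖ ^ 2 ≤ 4 * (L0 + L1 * ‖gradient f x‖) * (f x - f xstar) := by
  refine sq_norm_gradient_le_four_mul_sub hf hmin (by positivity) fun z hz => ?_
  have hradius : ‖gradient f x‖ / (2 * (L0 + L1 * ‖gradient f x‖)) ≤ 1 / L1 := by
    rw [div_le_div_iff₀ (by positivity) hL1]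
    nlinarith [norm_nonneg (gradient f x)]
  simpa only [norm_sub_rev] using hsmooth x z (by rw [norm_sub_rev]; exact hz.trans hradius)

noncomputable def polyakStep (f : E → ℝ) (fstar : ℝ) (u : E) : E :=
  u - ((f u - fstar) / ‖gradient f u‖ ^ 2) • gradient f u

theorem norm_polyakStep_sub_sq_le (hconv : ConvexOn ℝ univ f) {u xstar : E}
    (hf : DifferentiableAt ℝ f u) (hu : f xstar ≤ f u) :
    ‖polyakStep f (f xstar) u - xstar‖ ^ 2 ≤
      ‖u - xstar‖ ^ 2 - (f u - f xstar) ^ 2 / ‖gradient f u‖ ^ 2 := by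
  set g := gradient f u
  set η := (f u - f xstar) / ‖g‖ ^ 2
  have hη : 0 ≤ η := div_nonneg (sub_nonneg.mpr hu) (sq_nonneg _)
  have hconvex : f u - f xstar ≤ ⟪u - xstar, g⟫ := by
    have := hconv.add_inner_gradient_le hf xstar
    rw [← neg_sub u xstar, inner_neg_right, real_inner_comm] at this
    linarith
  have hsq : η ^ 2 * ‖g‖ ^ 2 = η * (f u - f xstar) := by
    rcases eq_or_ne ‖g‖ 0 with hg | hg
    · simp [η, hg]
    · simp only [η]; field_simp
  have hsplit : polyakStep f (f xstar) u - xstar = (u - xstar) - η • g := by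
    simp only [polyakStep, η, g]; abel
  have hηs : η * (f u - f xstar) = (f u - f xstar) ^ 2 / ‖g‖ ^ 2 := by simp only [η]; ring
  rw [hsplit, norm_sub_sq_real, real_inner_smul_right, norm_smul, mul_pow, Real.norm_eq_abs,
    sq_abs, hsq]
  nlinarith [mul_le_mul_of_nonneg_left hconvex hη]

theorem sum_sq_div_sq_le_of_polyakStep (hconv : ConvexOn ℝ univ f) (hf : Differentiable ℝ f)
    {xstar : E} (hmin : ∀ y, f xstar ≤ f y) {T : ℕ} {x : ℕ → E}
    (hstep : ∀ t < T, x (t + 1) = polyakStep f (f xstar) (x t)) :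
    ∑ t ∈ Finset.range T, (f (x t) - f xstar) ^ 2 / ‖gradient f (x t)‖ ^ 2 ≤
      ‖x 0 - xstar‖ ^ 2 :=
  calc ∑ t ∈ Finset.range T, (f (x t) - f xstar) ^ 2 / ‖gradient f (x t)‖ ^ 2
      ≤ ∑ t ∈ Finset.range T, (‖x t - xstar‖ ^ 2 - ‖x (t + 1) - xstar‖ ^ 2) := by
        refine Finset.sum_le_sum fun t ht => ?_
        rw [hstep t (Finset.mem_range.mp ht)]
        linarith [norm_polyakStep_sub_sq_le hconv (hf (x t)) (hmin (x t))]
    _ = ‖x 0 - xstar‖ ^ 2 - ‖x T - xstar‖ ^ 2 := Finset.sum_range_sub' _ _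
    _ ≤ ‖x 0 - xstar‖ ^ 2 := sub_le_self _ (sq_nonneg _)

end Gradient

section Rate

variable {L L0 L1 Δ : ℝ}

theorem div_le_sq_div_sq_of_sq_le {s q : ℝ} (hL0 : 0 < L0) (hL1 : 0 ≤ L1) (hΔ : 0 ≤ Δ)
    (hΔs : Δ ≤ s) (hq : 0 < q) (hqL : q ^ 2 ≤ 4 * L * s)
    (hqL01 : q ^ 2 ≤ 4 * (L0 + L1 * q) * s) :
    Δ / (4 * (L0 + 2 * L1 * (√L * √Δ))) ≤ s ^ 2 / q ^ 2 := by
  have hs : 0 ≤ s := hΔ.trans hΔs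
  have hL : 0 ≤ L := by nlinarith
  have hq_le : q ≤ 2 * (√L * √s) := by
    rw [← pow_le_pow_iff_left₀ hq.le (by positivity) two_ne_zero]
    calc q ^ 2 ≤ 4 * L * s := hqL
      _ = (2 * (√L * √s)) ^ 2 := by rw [mul_pow, mul_pow, Real.sq_sqrt hL, Real.sq_sqrt hs]; ring
  have hqK : q ^ 2 ≤ 4 * (L0 + 2 * L1 * (√L * √s)) * s :=
    hqL01.trans <| mul_le_mul_of_nonneg_right
      (by nlinarith [mul_le_mul_of_nonneg_left hq_le hL1]) hs
  -- the lower bound `s / (4 (L0 + 2 L1 √L √s))` on the term is increasing in `s`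
  have hmono : Δ * (L0 + 2 * L1 * (√L * √s)) ≤ s * (L0 + 2 * L1 * (√L * √Δ)) := by
    have hsqrt : √Δ ≤ √s := Real.sqrt_le_sqrt hΔs
    have hcross : Δ * √s ≤ s * √Δ := by
      have hfactor : s * √Δ - Δ * √s = √Δ * √s * (√s - √Δ) := by
        linear_combination (-√Δ) * Real.mul_self_sqrt hs + √s * Real.mul_self_sqrt hΔ
      have := mul_nonneg (mul_nonneg (Real.sqrt_nonneg Δ) (Real.sqrt_nonneg s))
        (sub_nonneg.2 hsqrt)
      linarith
    nlinarith [mul_le_mul_of_nonneg_left hcross (by positivity : (0 : ℝ) ≤ 2 * L1 * √L)]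
  rw [div_le_div_iff₀ (by positivity) (by positivity)]
  nlinarith [mul_le_mul_of_nonneg_left hqK hΔ,
    mul_le_mul_of_nonneg_left hmono (by positivity : (0 : ℝ) ≤ 4 * s)]

theorem le_add_div_of_mul_div_le {T D : ℝ} (hT : 0 < T) (hL : 0 ≤ L) (hL0 : 0 < L0)
    (hL1 : 0 ≤ L1) (hΔ : 0 ≤ Δ) (h : T * (Δ / (4 * (L0 + 2 * L1 * (√L * √Δ)))) ≤ D) :
    Δ ≤ 8 * L0 * D / T + 64 * L * L1 ^ 2 * D ^ 2 / T ^ 2 := by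
  have hTΔ : T * Δ ≤ 4 * (L0 + 2 * L1 * (√L * √Δ)) * D := by
    rwa [mul_div_assoc', div_le_iff₀ (by positivity), mul_comm D] at h
  have hamgm : 16 * L1 * D * T * (√L * √Δ) ≤ T ^ 2 * Δ + 64 * L * L1 ^ 2 * D ^ 2 := by
    have hsquare : T ^ 2 * Δ + 64 * L * L1 ^ 2 * D ^ 2 - 16 * L1 * D * T * (√L * √Δ) =
        (T * √Δ - 8 * L1 * D * √L) ^ 2 := by
      linear_combination (-T ^ 2) * Real.sq_sqrt hΔ - 64 * L1 ^ 2 * D ^ 2 * Real.sq_sqrt hL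
    nlinarith [sq_nonneg (T * √Δ - 8 * L1 * D * √L)]
  have hsq : T ^ 2 * Δ ≤ 8 * L0 * D * T + 64 * L * L1 ^ 2 * D ^ 2 := by
    nlinarith [mul_le_mul_of_nonneg_left hTΔ hT.le]
  rw [div_add_div _ _ hT.ne' (by positivity), le_div_iff₀ (by positivity)]
  nlinarith

end Rate

/-- Convergence of gradient descent with Polyak stepsize under convexity,
L-smoothness and (L0, L1)-smoothness:
`min_{0≤t≤T−1} f(x_t) − f* ≤ 8L0‖x_0 − x*‖²/T + 64 L L1² ‖x_0 − x*‖⁴/T²`. -/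
theorem polyak_stepsize_convergence_generalized_smooth {d : ℕ}
    (f : EuclideanSpace ℝ (Fin d) → ℝ) (L L0 L1 : ℝ)
    (hL : 0 < L) (hL0 : 0 < L0) (hL1 : 0 < L1)
    (hdiff : Differentiable ℝ f)
    (hconv : ConvexOn ℝ Set.univ f)
    (hLsmooth : ∀ x y : EuclideanSpace ℝ (Fin d),
      ‖gradient f x - gradient f y‖ ≤ L * ‖x - y‖)
    (hsmooth : ∀ x y : EuclideanSpace ℝ (Fin d), ‖x - y‖ ≤ 1 / L1 →
      ‖gradient f x - gradient f y‖ ≤ (L0 + L1 * ‖gradient f x‖) * ‖x - y‖)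
    (xstar : EuclideanSpace ℝ (Fin d)) (hmin : ∀ y, f xstar ≤ f y)
    (T : ℕ) (hT : 1 ≤ T)
    (x : ℕ → EuclideanSpace ℝ (Fin d))
    (hgrad : ∀ t < T, gradient f (x t) ≠ 0)
    (hstep : ∀ t < T, x (t + 1) =
      x t - ((f (x t) - f xstar) / ‖gradient f (x t)‖ ^ 2) • gradient f (x t)) :
    (Finset.range T).inf' (Finset.nonempty_range_iff.mpr (by omega))
        (fun t => f (x t) - f xstar) ≤
      8 * L0 * ‖x 0 - xstar‖ ^ 2 / T +
        64 * L * L1 ^ 2 * ‖x 0 - xstar‖ ^ 4 / (T : ℝ) ^ 2 := by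
  set Δ := (Finset.range T).inf' (Finset.nonempty_range_iff.mpr (by omega))
    (fun t => f (x t) - f xstar)
  have hΔ_nonneg : 0 ≤ Δ := Finset.le_inf' _ _ fun t _ => sub_nonneg.mpr (hmin (x t))
  have hterm : ∀ t ∈ Finset.range T, Δ / (4 * (L0 + 2 * L1 * (√L * √Δ))) ≤
      (f (x t) - f xstar) ^ 2 / ‖gradient f (x t)‖ ^ 2 := fun t ht =>
    div_le_sq_div_sq_of_sq_le hL0 hL1.le hΔ_nonneg (Finset.inf'_le _ ht)
      (norm_pos_iff.mpr (hgrad t (Finset.mem_range.mp ht)))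
      (sq_norm_gradient_le_four_mul_sub hdiff hmin hL fun z _ => hLsmooth z (x t))
      (sq_norm_gradient_le_of_generalized_smooth hdiff hL0 hL1 hsmooth hmin (x t))
  have hsum := (Finset.card_nsmul_le_sum _ _ _ hterm).trans
    (sum_sq_div_sq_le_of_polyakStep hconv hdiff hmin hstep)
  rw [Finset.card_range, nsmul_eq_mul] at hsum
  have hrate := le_add_div_of_mul_div_le (by positivity) hL.le hL0 hL1.le hΔ_nonneg hsum
  rwa [← pow_mul] at hrate
end

section
/- Let f : ℝ^d → ℝ be twice continuously differentiable with ‖∇²f(x)‖ ≤ L0 + L1‖∇f(x)‖ for all x ∈ ℝ^d, where L0 > 0 and L1 > 0. Then for all x, y ∈ ℝ^d with ‖x − y‖ ≤ 1/L1, ‖∇f(x) − ∇f(y)‖ ≤ 2(L0 + L1‖∇f(x)‖)‖x − y‖. -/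
/-!
Along the segment `c t = x + t • (y - x)`, the increment `u t = ∇f (c t) - ∇f x` satisfies
`‖u' t‖ ≤ K ‖u t‖ + ε` with `K = L1 ‖x - y‖ ≤ 1` and `ε = (L0 + L1 ‖∇f x‖) ‖x - y‖`, because
`‖∇f (c t)‖ ≤ ‖u t‖ + ‖∇f x‖`. Grönwall's inequality gives `‖u 1‖ ≤ ε (exp K - 1) / K`, and by
convexity of `exp` this is at most `(exp 1 - 1) ε ≤ 2 ε`.
-/

open Real

theorem ContDiff.contDiff_gradient {F : Type*} [NormedAddCommGroup F] [InnerProductSpace ℝ F]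
    [CompleteSpace F] {f : F → ℝ} {m n : WithTop ℕ∞} (hf : ContDiff ℝ n f) (hmn : m + 1 ≤ n) :
    ContDiff ℝ m (gradient f) :=
  (InnerProductSpace.toDual ℝ F).symm.contDiff.comp (hf.fderiv_right hmn)

theorem gronwallBound_zero_one_le_two_mul {K ε : ℝ} (hK₀ : 0 ≤ K) (hK₁ : K ≤ 1) (hε : 0 ≤ ε) :
    gronwallBound 0 K ε 1 ≤ 2 * ε := by
  rcases hK₀.eq_or_lt with rfl | hK
  · simp only [gronwallBound_K0]
    linarith
  rw [gronwallBound_of_K_ne_0 hK.ne']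
  have hchord : exp K ≤ 1 - K + K * exp 1 := by
    simpa [smul_eq_mul] using convexOn_exp.2 (Set.mem_univ 0) (Set.mem_univ 1)
      (by linarith : (0:ℝ) ≤ 1 - K) hK₀ (by ring)
  have he : exp 1 < 3 := by linarith [exp_one_lt_d9]
  calc 0 * exp (K * 1) + ε / K * (exp (K * 1) - 1) ≤ ε / K * (K * (exp 1 - 1)) := by
        rw [zero_mul, zero_add, mul_one]
        gcongr
        linarith
    _ = ε * (exp 1 - 1) := by field_simp
    _ ≤ 2 * ε := by nlinarith

theorem norm_sub_le_two_mul_of_norm_fderiv_le {E F : Type*} [NormedAddCommGroup E]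
    [NormedSpace ℝ E] [NormedAddCommGroup F] [NormedSpace ℝ F] {g : E → F} {L0 L1 : ℝ}
    (hg : Differentiable ℝ g) (hL1 : 0 ≤ L1)
    (hbound : ∀ z, ‖fderiv ℝ g z‖ ≤ L0 + L1 * ‖g z‖) {x y : E} (hxy : L1 * ‖x - y‖ ≤ 1) :
    ‖g x - g y‖ ≤ 2 * (L0 + L1 * ‖g x‖) * ‖x - y‖ := by
  set v := y - x
  have hv : ‖v‖ = ‖x - y‖ := norm_sub_rev y x
  let c : ℝ → E := fun t => x + t • v
  have hc : ∀ t, HasDerivAt c v t := fun t => by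
    simpa only [one_smul] using ((hasDerivAt_id' t).smul_const v).const_add x
  let h : ℝ → F := fun t => g (c t) - g x
  have hh : ∀ t, HasDerivAt h (fderiv ℝ g (c t) v) t := fun t =>
    ((hg (c t)).hasFDerivAt.comp_hasDerivAt t (hc t)).sub_const (g x)
  have hderiv : ∀ t, ‖fderiv ℝ g (c t) v‖ ≤ L1 * ‖v‖ * ‖h t‖ + (L0 + L1 * ‖g x‖) * ‖v‖ :=
    fun t => calc
      ‖fderiv ℝ g (c t) v‖ ≤ (L0 + L1 * ‖g (c t)‖) * ‖v‖ :=
        (fderiv ℝ g (c t)).le_of_opNorm_le (hbound _) v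
      _ ≤ (L0 + L1 * (‖h t‖ + ‖g x‖)) * ‖v‖ := by
        gcongr
        exact norm_le_norm_sub_add _ _
      _ = _ := by ring
  have hgron := norm_le_gronwallBound_of_norm_deriv_right_le (δ := 0)
    (fun t _ => (hh t).continuousAt.continuousWithinAt) (fun t _ => (hh t).hasDerivWithinAt)
    (by simp [h, c]) (fun t _ => hderiv t) 1 ⟨zero_le_one, le_rfl⟩
  have hε : 0 ≤ (L0 + L1 * ‖g x‖) * ‖v‖ :=
    mul_nonneg ((norm_nonneg _).trans (hbound x)) (norm_nonneg _)
  calc ‖g x - g y‖ = ‖h 1‖ := by simp [h, c, v, norm_sub_rev]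
    _ ≤ 2 * ((L0 + L1 * ‖g x‖) * ‖v‖) := by
      refine hgron.trans ?_
      rw [sub_zero]
      exact gronwallBound_zero_one_le_two_mul (by positivity) (by rwa [hv]) hε
    _ = _ := by rw [hv]; ring

theorem hessian_bound_implies_generalized_smooth_general {d : ℕ}
    (f : EuclideanSpace ℝ (Fin d) → ℝ) (L0 L1 : ℝ)
    (hL1 : 0 < L1)
    (hf : ContDiff ℝ 2 f)
    (hhess : ∀ x : EuclideanSpace ℝ (Fin d),
      ‖fderiv ℝ (gradient f) x‖ ≤ L0 + L1 * ‖gradient f x‖) :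
    ∀ x y : EuclideanSpace ℝ (Fin d), ‖x - y‖ ≤ 1 / L1 →
      ‖gradient f x - gradient f y‖ ≤ 2 * (L0 + L1 * ‖gradient f x‖) * ‖x - y‖ := by
  intro x y hxy
  have hgrad : Differentiable ℝ (gradient f) :=
    (hf.contDiff_gradient (by norm_num)).differentiable one_ne_zero
  exact norm_sub_le_two_mul_of_norm_fderiv_le hgrad hL1.le hhess ((le_div_iff₀' hL1).1 hxy)

/-- If `f` is C² and the Hessian satisfies
`‖∇²f(x)‖ ≤ L0 + L1‖∇f(x)‖` everywhere, then for all `x, y` with `‖x − y‖ ≤ 1/L1`,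
`‖∇f(x) − ∇f(y)‖ ≤ 2(L0 + L1‖∇f(x)‖)‖x − y‖`. -/
theorem hessian_bound_implies_generalized_smooth {d : ℕ}
    (f : EuclideanSpace ℝ (Fin d) → ℝ) (L0 L1 : ℝ)
    (hL0 : 0 < L0) (hL1 : 0 < L1)
    (hf : ContDiff ℝ 2 f)
    (hhess : ∀ x : EuclideanSpace ℝ (Fin d),
      ‖fderiv ℝ (gradient f) x‖ ≤ L0 + L1 * ‖gradient f x‖) :
    ∀ x y : EuclideanSpace ℝ (Fin d), ‖x - y‖ ≤ 1 / L1 →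
      ‖gradient f x - gradient f y‖ ≤ 2 * (L0 + L1 * ‖gradient f x‖) * ‖x - y‖ :=
  hessian_bound_implies_generalized_smooth_general f L0 L1 hL1 hf hhess
end

section
/- Let L0 > 0 and L1 > 0, and let f : ℝ → ℝ be defined by f(x) = (L0 L1²/72) x⁴ + (L0/4) x². Then for every x ∈ ℝ, |f''(x)| ≤ (L1/2)|f'(x)| + L0/2. -/
/-! With `t = L1 |x|` one has `|f''(x)| = L0/36 · 6t² + L0/2` and
`(L1/2) |f'(x)| = L0/36 · (t³ + 9t)`, so the claim reduces to `t (t - 3)² ≥ 0`. -/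

lemma hasDerivAt_even_quartic (a b x : ℝ) :
    HasDerivAt (fun x => a * x ^ 4 + b * x ^ 2) (4 * a * x ^ 3 + 2 * b * x) x :=
  (((hasDerivAt_pow 4 x).const_mul a).add ((hasDerivAt_pow 2 x).const_mul b)).congr_deriv
    (by norm_num; ring)

lemma hasDerivAt_odd_cubic (a b x : ℝ) :
    HasDerivAt (fun x => a * x ^ 3 + b * x) (3 * a * x ^ 2 + b) x :=
  (((hasDerivAt_pow 3 x).const_mul a).add ((hasDerivAt_id' x).const_mul b)).congr_deriv
    (by norm_num; ring)

lemma six_mul_sq_le_cube_add (t : ℝ) (ht : 0 ≤ t) : 6 * t ^ 2 ≤ t ^ 3 + 9 * t := by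
  nlinarith [mul_nonneg ht (sq_nonneg (t - 3))]

/-- For `f(x) = (L0 L1²/72)x⁴ + (L0/4)x²`, we have
`|f''(x)| ≤ (L1/2)|f'(x)| + L0/2` for every real `x`. -/
theorem quartic_second_deriv_bound (L0 L1 : ℝ) (hL0 : 0 < L0) (hL1 : 0 < L1)
    (f : ℝ → ℝ) (hf : f = fun x => L0 * L1 ^ 2 / 72 * x ^ 4 + L0 / 4 * x ^ 2) :
    ∀ x : ℝ, |deriv (deriv f) x| ≤ L1 / 2 * |deriv f x| + L0 / 2 := by
  have hf' : deriv f = fun x => L0 * L1 ^ 2 / 18 * x ^ 3 + L0 / 2 * x := by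
    funext x
    rw [hf, (hasDerivAt_even_quartic _ _ x).deriv]
    ring
  have hf'' : deriv (deriv f) = fun x => L0 * L1 ^ 2 / 6 * x ^ 2 + L0 / 2 := by
    funext x
    rw [hf', (hasDerivAt_odd_cubic _ _ x).deriv]
    ring
  intro x
  have hf'_factor : deriv f x = x * (L0 * L1 ^ 2 / 18 * |x| ^ 2 + L0 / 2) := by
    rw [hf', sq_abs]
    ring
  calc |deriv (deriv f) x| = L0 / 36 * (6 * (L1 * |x|) ^ 2) + L0 / 2 := by
        rw [hf'', abs_of_nonneg (by positivity), mul_pow, sq_abs]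
        ring
    _ ≤ L0 / 36 * ((L1 * |x|) ^ 3 + 9 * (L1 * |x|)) + L0 / 2 := by
        gcongr
        exact six_mul_sq_le_cube_add _ (by positivity)
    _ = L1 / 2 * |deriv f x| + L0 / 2 := by
        rw [hf'_factor, abs_mul, abs_of_nonneg (a := _ + _) (by positivity)]
        ring
end

section
/- Let L0 > 0 and L1 > 0, and let f : ℝ → ℝ be defined by f(x) = (L0 L1²/72) x⁴ + (L0/4) x². Then f is (L0, L1)-smooth: for all x, y ∈ ℝ with |x − y| ≤ 1/L1, |f'(x) − f'(y)| ≤ (L0 + L1|f'(x)|)|x − y|. -/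
/-!
Rescaling `x ↦ c * g (a * x)` turns a `(A, B)`-smooth `g` into an `(|c| a² A, |a| B)`-smooth
function, and the quartic is `(L0 / L1²) * q (L1 * x)` with `q u = u⁴/72 + u²/4`, so it suffices
that `q` is `(1, 1)`-smooth. There `q' u - q' v = (u - v) ((u² + u v + v²)/18 + 1/2)`, and for
`|u - v| ≤ 1` the second factor is at most `(3|u|² + 3|u| + 1)/18 + 1/2 ≤ 1 + |q' u|`.
-/

def IsGeneralizedSmooth (L0 L1 : ℝ) (f : ℝ → ℝ) : Prop :=
  ∀ x y : ℝ, |x - y| ≤ 1 / L1 → |deriv f x - deriv f y| ≤ (L0 + L1 * |deriv f x|) * |x - y|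

theorem IsGeneralizedSmooth.comp_mul {A B : ℝ} {g : ℝ → ℝ} (hg : IsGeneralizedSmooth A B g)
    (c a : ℝ) : IsGeneralizedSmooth (|c| * a ^ 2 * A) (|a| * B) (fun x => c * g (a * x)) := by
  have hderiv : ∀ x, deriv (fun x => c * g (a * x)) x = c * a * deriv g (a * x) := fun x => by
    rw [deriv_const_mul_field']
    dsimp only
    rw [deriv_comp_mul_left, smul_eq_mul, mul_assoc]
  intro x y hxy
  rcases eq_or_ne x y with rfl | hne
  · simp
  have hscaled : |a * x - a * y| ≤ 1 / B := by
    have hpos : 0 < |a| * B := one_div_pos.mp ((abs_pos.mpr (sub_ne_zero.mpr hne)).trans_le hxy)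
    rw [le_div_iff₀ hpos] at hxy
    rw [← mul_sub, abs_mul, le_div_iff₀ (pos_of_mul_pos_right hpos (abs_nonneg a))]
    linarith
  simp only [hderiv, ← mul_sub, abs_mul]
  calc |c| * |a| * |deriv g (a * x) - deriv g (a * y)|
      ≤ |c| * |a| * ((A + B * |deriv g (a * x)|) * (|a| * |x - y|)) := by
        gcongr
        simpa only [← abs_mul, mul_sub] using hg _ _ hscaled
    _ = (|c| * a ^ 2 * A + |a| * B * (|c| * |a| * |deriv g (a * x)|)) * |x - y| := by
        rw [← sq_abs a]; ring

theorem deriv_quartic (u : ℝ) :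
    deriv (fun u : ℝ => u ^ 4 / 72 + u ^ 2 / 4) u = u ^ 3 / 18 + u / 2 := by
  have := ((hasDerivAt_pow 4 u).div_const 72).add ((hasDerivAt_pow 2 u).div_const 4)
  refine (this.congr_deriv ?_).deriv
  norm_num
  ring

theorem isGeneralizedSmooth_quartic :
    IsGeneralizedSmooth 1 1 (fun u : ℝ => u ^ 4 / 72 + u ^ 2 / 4) := by
  intro u v huv
  rw [div_one] at huv
  rw [deriv_quartic, deriv_quartic, one_mul]
  have hfactor : u ^ 3 / 18 + u / 2 - (v ^ 3 / 18 + v / 2)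
      = (u - v) * ((u ^ 2 + u * v + v ^ 2) / 18 + 1 / 2) := by ring
  have habs : |u ^ 3 / 18 + u / 2| = |u| ^ 3 / 18 + |u| / 2 := by
    rw [show u ^ 3 / 18 + u / 2 = u * (u ^ 2 / 18 + 1 / 2) by ring, abs_mul,
      abs_of_pos (by positivity : (0 : ℝ) < u ^ 2 / 18 + 1 / 2), ← sq_abs u]
    ring
  have hcross : u ^ 2 + u * v + v ^ 2 ≤ 3 * |u| ^ 2 + 3 * |u| + 1 := by
    have huv' : |u * (v - u)| ≤ |u| := by
      rw [abs_mul, abs_sub_comm]; exact mul_le_of_le_one_right (abs_nonneg u) huv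
    have hsq : (v - u) ^ 2 ≤ 1 := by
      rw [← sq_abs, abs_sub_comm]; exact pow_le_one₀ (abs_nonneg _) huv
    nlinarith [le_abs_self (u * (v - u)), sq_abs u]
  have hcross_nonneg : 0 ≤ u ^ 2 + u * v + v ^ 2 := by
    nlinarith [sq_nonneg (u + v), sq_nonneg u, sq_nonneg v]
  rw [hfactor, abs_mul, abs_of_nonneg (by positivity : 0 ≤ (u ^ 2 + u * v + v ^ 2) / 18 + 1 / 2),
    habs, mul_comm]
  refine mul_le_mul_of_nonneg_right ?_ (abs_nonneg _)
  nlinarith [abs_nonneg u, sq_nonneg (|u| - 3 / 2)]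

/-- The quartic `f(x) = (L0 L1²/72)x⁴ + (L0/4)x²` is (L0, L1)-smooth:
for all `x, y` with `|x − y| ≤ 1/L1`, `|f'(x) − f'(y)| ≤ (L0 + L1|f'(x)|)|x − y|`. -/
theorem quartic_is_generalized_smooth (L0 L1 : ℝ) (hL0 : 0 < L0) (hL1 : 0 < L1)
    (f : ℝ → ℝ) (hf : f = fun x => L0 * L1 ^ 2 / 72 * x ^ 4 + L0 / 4 * x ^ 2) :
    ∀ x y : ℝ, |x - y| ≤ 1 / L1 →
      |deriv f x - deriv f y| ≤ (L0 + L1 * |deriv f x|) * |x - y| := by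
  have hrescale : f = fun x => L0 / L1 ^ 2 * ((L1 * x) ^ 4 / 72 + (L1 * x) ^ 2 / 4) := by
    subst hf; funext x; field_simp
  have hL0' : |L0 / L1 ^ 2| * L1 ^ 2 * 1 = L0 := by
    rw [abs_of_pos (by positivity)]; field_simp
  have h := isGeneralizedSmooth_quartic.comp_mul (L0 / L1 ^ 2) L1
  rw [hL0', abs_of_pos hL1, mul_one, ← hrescale] at h
  exact h
end
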